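/- Let c > 0, L > 0, T > 0, K ∈ ℕ, and set λ_k = kπ/L for k = 1, …, K. Suppose two coefficient vectors (b_k) and (b'_k) in ℝ^K give truncated series solutions w_K(x,t) = (√2/c^2) Σ_{k=1}^{K} (b_k/λ_k^2)(1 − cos(c λ_k t)) sin(λ_k x) and w'_K analogously, and that their fluxes agree at x = 0: ∂_x w_K(0,t) = ∂_x w'_K(0,t) for all t ∈ [0,T]. Then b_k = b'_k for all k, and hence w_K = w'_K and the associated forces f_K(x) = √2 Σ_{k=1}^{K} b_k sin(λ_k x) and f'_K coincide. -/

import Mathlib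

/-! Subtracting the two flux measurements leaves `∑ d_k (1 - cos (μ_k t)) = 0` on `(0, T)` with
`d_k = (b_k - b'_k) / λ_k` and distinct frequencies `μ_k = c λ_k`. The left side is analytic in `t`,
so it vanishes on all of `ℝ`; its even derivatives at `t = 0` are the power sums
`∑ d_k μ_k ^ (2n)`, `n ≥ 1`, and a Vandermonde argument in the nodes `μ_k²` forces every `d_k` to
vanish. -/

open Real Finset Filter Topology

theorem Finset.eq_zero_of_forall_sum_mul_pow_eq_zero {ι R : Type*} [CommRing R] [IsDomain R]
    {s : Finset ι} {x a : ι → R} (hx : Set.InjOn x s)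
    (h : ∀ n < #s, ∑ i ∈ s, a i * x i ^ n = 0) : ∀ i ∈ s, a i = 0 := by
  set e := s.equivFin
  have hv : (fun j => a (e.symm j)) = 0 := by
    refine Matrix.eq_zero_of_forall_pow_sum_mul_pow_eq_zero (f := fun j => x (e.symm j)) ?_ ?_
    · exact fun i j hij => e.symm.injective (Subtype.ext (hx (e.symm i).2 (e.symm j).2 hij))
    · intro n
      rw [← h n n.2, ← s.sum_coe_sort]
      exact e.symm.sum_comp (fun i => a i * x i ^ (n : ℕ))
  intro i hi
  simpa using congr_fun hv (e ⟨i, hi⟩)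

section TrigonometricSums

variable {ι : Type*}

theorem iteratedDeriv_even_sum_mul_cos (s : Finset ι) (d μ : ι → ℝ) (n : ℕ) (t : ℝ) :
    iteratedDeriv (2 * n) (fun t => ∑ k ∈ s, d k * cos (μ k * t)) t =
      (-1) ^ n * ∑ k ∈ s, d k * μ k ^ (2 * n) * cos (μ k * t) := by
  rw [iteratedDeriv_fun_sum fun k _ => by fun_prop, mul_sum]
  refine sum_congr rfl fun k _ => ?_
  rw [iteratedDeriv_const_mul_field, iteratedDeriv_comp_const_mul contDiff_cos,
    iteratedDeriv_even_cos]
  simp only [Pi.mul_apply, Pi.pow_apply, Pi.neg_apply, Pi.one_apply]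
  ring

theorem eq_zero_of_sum_mul_one_sub_cos_eventuallyEq_zero {s : Finset ι} {d μ : ι → ℝ} {t₀ : ℝ}
    (hμ : ∀ k ∈ s, μ k ≠ 0) (hinj : Set.InjOn (fun k => μ k ^ 2) s)
    (h : (fun t => ∑ k ∈ s, d k * (1 - cos (μ k * t))) =ᶠ[𝓝 t₀] 0) : ∀ k ∈ s, d k = 0 := by
  have hconst : (fun t => ∑ k ∈ s, d k * cos (μ k * t)) = fun _ => ∑ k ∈ s, d k := by
    refine AnalyticOnNhd.eq_of_eventuallyEq (𝕜 := ℝ) (z₀ := t₀) (fun t _ => ?_)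
      analyticOnNhd_const ?_
    · fun_prop
    · filter_upwards [h] with t ht
      simp only [Pi.zero_apply, mul_sub, mul_one, sum_sub_distrib] at ht
      linarith
  have hpow : ∀ n : ℕ, ∑ k ∈ s, d k * μ k ^ 2 * (μ k ^ 2) ^ n = 0 := by
    intro n
    have := iteratedDeriv_even_sum_mul_cos s d μ (n + 1) 0
    rw [hconst, iteratedDeriv_const, if_neg (by omega), eq_comm, mul_eq_zero] at this
    calc _ = ∑ k ∈ s, d k * μ k ^ (2 * (n + 1)) * cos (μ k * 0) :=
          sum_congr rfl fun k _ => by rw [mul_zero, cos_zero]; ring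
      _ = 0 := this.resolve_left (by simp)
  intro k hk
  have := Finset.eq_zero_of_forall_sum_mul_pow_eq_zero hinj (fun n _ => hpow n) k hk
  simpa [hμ k hk] using this

theorem deriv_const_mul_sum_mul_sin_zero (s : Finset ι) (C : ℝ) (a l : ι → ℝ) :
    deriv (fun x => C * ∑ k ∈ s, a k * sin (l k * x)) 0 = C * ∑ k ∈ s, a k * l k := by
  refine ((HasDerivAt.fun_sum fun k _ => ?_).const_mul C).deriv
  simpa using (((hasDerivAt_id (0 : ℝ)).const_mul (l k)).sin).const_mul (a k)

end TrigonometricSums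

theorem injective_sq_const_mul_natCast {a : ℝ} (ha : a ≠ 0) :
    Function.Injective fun k : ℕ => (a * k) ^ 2 := by
  intro i j hij
  simp only [mul_pow] at hij
  have := (pow_left_inj₀ (Nat.cast_nonneg i) (Nat.cast_nonneg j) two_ne_zero).1
    (mul_left_cancel₀ (pow_ne_zero 2 ha) hij)
  exact_mod_cast this

/-- Within the class of truncated separation-of-variables solutions with
Dirichlet eigenvalues `λ_k = kπ/L`, the flux measurement `∂ₓw_K(0,t)` on `[0,T]` uniquely
determines the coefficients: if two coefficient vectors give series whose fluxes at `x = 0`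
agree on `[0,T]`, then the coefficients, the series and the associated forces coincide. -/
theorem truncated_series_uniqueness_from_flux
    (c L T : ℝ) (hc : 0 < c) (hL : 0 < L) (hT : 0 < T) (K : ℕ)
    (lam : ℕ → ℝ) (hlam : ∀ k, lam k = k * Real.pi / L)
    (b b' : ℕ → ℝ)
    (wK wK' : ℝ → ℝ → ℝ)
    (hwK : ∀ x t, wK x t = (Real.sqrt 2 / c ^ 2) *
      ∑ k ∈ Finset.Icc 1 K,
        (b k / (lam k) ^ 2) * (1 - Real.cos (c * lam k * t)) * Real.sin (lam k * x))
    (hwK' : ∀ x t, wK' x t = (Real.sqrt 2 / c ^ 2) *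
      ∑ k ∈ Finset.Icc 1 K,
        (b' k / (lam k) ^ 2) * (1 - Real.cos (c * lam k * t)) * Real.sin (lam k * x))
    (fK fK' : ℝ → ℝ)
    (hfK : ∀ x, fK x = Real.sqrt 2 * ∑ k ∈ Finset.Icc 1 K, b k * Real.sin (lam k * x))
    (hfK' : ∀ x, fK' x = Real.sqrt 2 * ∑ k ∈ Finset.Icc 1 K, b' k * Real.sin (lam k * x))
    (hflux : ∀ t ∈ Set.Icc 0 T,
      deriv (fun y => wK y t) 0 = deriv (fun y => wK' y t) 0) :
    (∀ k ∈ Finset.Icc 1 K, b k = b' k) ∧ wK = wK' ∧ fK = fK' := by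
  have hlam_ne : ∀ k ∈ Icc 1 K, lam k ≠ 0 := fun k hk => by
    have : (1 : ℝ) ≤ k := by exact_mod_cast (mem_Icc.1 hk).1
    rw [hlam]; positivity
  have hμ_inj : Set.InjOn (fun k => (c * lam k) ^ 2) (Icc 1 K) := by
    have : (fun k => (c * lam k) ^ 2) = fun k : ℕ => (c * π / L * k) ^ 2 :=
      funext fun k => by rw [hlam]; ring
    rw [this]
    exact (injective_sq_const_mul_natCast (by positivity)).injOn
  have hcoeff : ∀ k ∈ Icc 1 K, (b k - b' k) / lam k = 0 := by
    refine eq_zero_of_sum_mul_one_sub_cos_eventuallyEq_zero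
      (fun k hk => mul_ne_zero hc.ne' (hlam_ne k hk)) hμ_inj (t₀ := T / 2) ?_
    filter_upwards [Ioo_mem_nhds (half_pos hT) (half_lt_self hT)] with t ht
    have hflux_t := hflux t (Set.Ioo_subset_Icc_self ht)
    simp only [hwK, hwK', deriv_const_mul_sum_mul_sin_zero] at hflux_t
    rw [Pi.zero_apply, ← sub_eq_zero.2 (mul_left_cancel₀ (by positivity) hflux_t),
      ← sum_sub_distrib]
    refine sum_congr rfl fun k hk => ?_
    field_simp [hlam_ne k hk]
  have hb : ∀ k ∈ Icc 1 K, b k = b' k := fun k hk =>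
    sub_eq_zero.1 ((div_eq_zero_iff.1 (hcoeff k hk)).resolve_right (hlam_ne k hk))
  refine ⟨hb, ?_, ?_⟩
  · ext x t
    rw [hwK, hwK', sum_congr rfl fun k hk => by rw [hb k hk]]
  · ext x
    rw [hfK, hfK', sum_congr rfl fun k hk => by rw [hb k hk]]
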